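/- Lemma (bijection for scaffold index shift): Let p be prime, n ≥ 1, b_1,...,b_n coprime to p with associated 𝔟 and 𝔞 (so 𝔟(𝔞(t)) ≡ −t mod p^n), let h ∈ ℤ, b the unique element of {h, h+1, ..., h+p^n−1} with 𝔞(b) = p^n−1, and for s ∈ {0,...,p^n−1}, t ∈ {h,...,h+p^n−1}, define H(s,t) = h + ((𝔟(s)+t−h) mod p^n) and D(s,t) = ⌊(𝔟(s)+t−h)/p^n⌋, d(u) = D(u,b). Then for each s, the map t ↦ u defined by u + 𝔞(t) = p^n − 1 + s is a bijection from {t : 𝔞(t) ⪰ s} to {u ∈ {0,...,p^n−1} : u ⪰ s}, with inverse u ↦ H(u−s, b); and under this bijection H(s,t) = H(u,b) and D(s,t) = d(u) − d(u−s). -/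
import Mathlib


/-- The `i`-th base-`p` digit of `s`. -/
def dig (p s i : ℕ) : ℕ := s / p ^ i % p

/-- Digitwise partial order on base-`p` expansions: `s ⪯ t`. -/
def preceq (p s t : ℕ) : Prop := ∀ i, dig p s i ≤ dig p t i

/-- The function 𝔟(s) = Σ_{i=1}^n s_{(n−i)} p^{n−i} b_i. -/
def bfun (p n : ℕ) (b : ℕ → ℤ) (s : ℕ) : ℤ :=
  ∑ i ∈ Finset.Icc 1 n, (dig p s (n - i) : ℤ) * (p : ℤ) ^ (n - i) * b i

/-- `H(s,t) = h + ((𝔟(s)+t−h) mod p^n)`. -/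
def Hfun (p n : ℕ) (b : ℕ → ℤ) (h : ℤ) (s : ℕ) (t : ℤ) : ℤ :=
  h + (bfun p n b s + t - h) % ((p : ℤ) ^ n)

/-- `D(s,t) = ⌊(𝔟(s)+t−h)/p^n⌋`. -/
def Dfun (p n : ℕ) (b : ℕ → ℤ) (h : ℤ) (s : ℕ) (t : ℤ) : ℤ :=
  Int.fdiv (bfun p n b s + t - h) ((p : ℤ) ^ n)


lemma dig_shift (p x i : ℕ) : dig p x (i+1) = dig p (x / p) i := by
  simp [dig, Nat.div_div_eq_div_mul, pow_succ']

lemma dig_lt (p : ℕ) (hp : 0 < p) (s i : ℕ) : dig p s i < p := Nat.mod_lt _ hp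

lemma dig_eq_zero (p s i : ℕ) (h : s < p ^ i) : dig p s i = 0 := by
  simp [dig, Nat.div_eq_of_lt h]

lemma le_of_preceq (p : ℕ) (hp : 2 ≤ p) : ∀ s t, preceq p s t → s ≤ t := by
  intro s
  induction s using Nat.strong_induction_on with
  | _ s ih =>
    intro t hst
    rcases Nat.eq_zero_or_pos s with hs | hs
    · omega
    · have h0 : s % p ≤ t % p := by simpa [dig] using hst 0
      have hdiv : s / p ≤ t / p := by
        refine ih (s / p) (Nat.div_lt_self hs (by omega)) (t / p) ?_
        intro i
        have := hst (i+1)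
        rwa [dig_shift, dig_shift] at this
      calc s = p * (s / p) + s % p := (Nat.div_add_mod s p).symm
        _ ≤ p * (t / p) + t % p := add_le_add (mul_le_mul_right hdiv p) h0
        _ = t := Nat.div_add_mod t p

lemma dig_add (p : ℕ) (hp : 0 < p) :
    ∀ i x y, (∀ j, dig p x j + dig p y j < p) → dig p (x + y) i = dig p x i + dig p y i := by
  intro i
  induction i with
  | zero =>
    intro x y hc
    have h0 : x % p + y % p < p := by simpa [dig] using hc 0
    simp only [dig, pow_zero, Nat.div_one]
    rw [Nat.add_mod, Nat.mod_eq_of_lt (by simpa using h0)]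
  | succ i ih =>
    intro x y hc
    have h0 : x % p + y % p < p := by simpa [dig] using hc 0
    have hdiv : (x + y) / p = x / p + y / p := by
      rw [Nat.add_div hp, if_neg (by omega)]
      omega
    rw [dig_shift, dig_shift, dig_shift, hdiv]
    refine ih (x / p) (y / p) ?_
    intro j
    rw [← dig_shift, ← dig_shift]
    exact hc (j+1)

lemma dig_compl (p : ℕ) (hp : 2 ≤ p) :
    ∀ n m i, m < p ^ n → i < n → dig p (p ^ n - 1 - m) i = p - 1 - dig p m i := by
  intro n
  induction n with
  | zero => intro m i _ hi; omega
  | succ n ih =>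
    intro m i hm hi
    have hP : 0 < p ^ n := pow_pos (by omega) n
    have hq : m / p < p ^ n := by
      rw [Nat.div_lt_iff_lt_mul (by omega)]
      calc m < p ^ (n+1) := hm
        _ = p ^ n * p := pow_succ p n
    have hr : m % p < p := Nat.mod_lt _ (by omega)
    have hpp : p ^ (n+1) = p * p ^ n := pow_succ' p n
    have hmd : p * (m / p) + m % p = m := Nat.div_add_mod m p
    have hYX : p * (m / p) + p ≤ p * p ^ n := by
      have := mul_le_mul_right (show m / p + 1 ≤ p ^ n by omega) p
      rw [Nat.mul_add, Nat.mul_one] at this; exact this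
    have hexp : p * (p ^ n - 1 - m / p) = p * p ^ n - p * (m / p) - p := by
      rw [Nat.sub_sub, Nat.mul_sub, Nat.mul_add, Nat.mul_one]
      omega
    have key : p ^ (n+1) - 1 - m = p * (p ^ n - 1 - m / p) + (p - 1 - m % p) := by
      omega
    rw [key]
    match i with
    | 0 =>
      simp only [dig, pow_zero, Nat.div_one]
      rw [Nat.mul_add_mod, Nat.mod_eq_of_lt (by omega)]
    | (j+1) =>
      rw [dig_shift]
      have hB : (p - 1 - m % p) / p = 0 := Nat.div_eq_of_lt (by omega)
      have hdiv : (p * (p ^ n - 1 - m / p) + (p - 1 - m % p)) / p = p ^ n - 1 - m / p := by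
        rw [Nat.mul_add_div (by omega), hB]
        omega
      rw [hdiv, ih (m / p) j hq (by omega), dig_shift]

lemma dig_pred_pow (p n j : ℕ) (hp : 2 ≤ p) (hj : j < n) : dig p (p ^ n - 1) j = p - 1 := by
  have h := dig_compl p hp n 0 j (pow_pos (by omega) n) hj
  simpa [dig] using h


lemma bfun_add (p n : ℕ) (b : ℕ → ℤ) (u s w : ℕ)
    (hd : ∀ j, dig p u j = dig p s j + dig p w j) :
    bfun p n b u = bfun p n b s + bfun p n b w := by
  unfold bfun
  rw [← Finset.sum_add_distrib]
  refine Finset.sum_congr rfl fun i _ => ?_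
  rw [hd (n - i)]
  push_cast
  ring

lemma bfun_compl (p n : ℕ) (hp : 2 ≤ p) (b : ℕ → ℤ) (w A : ℕ)
    (hd : ∀ j, j < n → dig p w j = p - 1 - dig p A j) :
    bfun p n b w + bfun p n b A = bfun p n b (p ^ n - 1) := by
  unfold bfun
  rw [← Finset.sum_add_distrib]
  refine Finset.sum_congr rfl fun i hi => ?_
  simp only [Finset.mem_Icc] at hi
  have hlt : n - i < n := by omega
  have hA : dig p A (n - i) < p := dig_lt p (by omega) A (n - i)
  rw [hd _ hlt, dig_pred_pow p n (n - i) hp hlt,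
    Nat.cast_sub (by omega : dig p A (n-i) ≤ p - 1),
    Nat.cast_sub (by omega : 1 ≤ p)]
  push_cast
  ring

lemma bfun_inj (p n : ℕ) (b : ℕ → ℤ) (a : ℤ → ℕ) (hpn : 0 < p ^ n)
    (ha : ∀ t : ℤ, a t < p ^ n ∧
      ((-(bfun p n b (a t)) : ℤ) : ZMod (p ^ n)) = ((t : ℤ) : ZMod (p ^ n))) :
    ∀ v w : ℕ, v < p ^ n → w < p ^ n →
      ((bfun p n b v : ℤ) : ZMod (p ^ n)) = ((bfun p n b w : ℤ) : ZMod (p ^ n)) → v = w := by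
  haveI : NeZero (p ^ n) := ⟨by omega⟩
  set F : Fin (p ^ n) → ZMod (p ^ n) :=
    fun s => ((-(bfun p n b s) : ℤ) : ZMod (p ^ n)) with hF
  have hsurj : Function.Surjective F := by
    intro c
    refine ⟨⟨a ((c.val : ℕ) : ℤ), (ha _).1⟩, ?_⟩
    have h2 := (ha ((c.val : ℕ) : ℤ)).2
    simp only [hF]
    rw [h2]
    push_cast
    simp [ZMod.natCast_val, ZMod.cast_id]
  have hbij : Function.Bijective F :=
    (Fintype.bijective_iff_surjective_and_card F).2 ⟨hsurj, by simp⟩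
  intro v w hv hw hvw
  have hFeq : F ⟨v, hv⟩ = F ⟨w, hw⟩ := by
    simp only [hF, Int.cast_neg]
    rw [hvw]
  have := hbij.1 hFeq
  simpa using this

theorem stmt_18 (p n : ℕ) (hp : p.Prime) (hn : 1 ≤ n) (b : ℕ → ℤ)
    (hb : ∀ i ∈ Finset.Icc 1 n, IsCoprime (b i) (p : ℤ))
    (a : ℤ → ℕ)
    -- `a` is the inverse of the bijection `s ↦ (−𝔟(s) mod p^n)`, extended to ℤ
    (ha : ∀ t : ℤ, a t < p ^ n ∧
      ((-(bfun p n b (a t)) : ℤ) : ZMod (p ^ n)) = ((t : ℤ) : ZMod (p ^ n)))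
    (h : ℤ)
    -- `bb` is the unique element of `{h, …, h+p^n−1}` with `𝔞(bb) = p^n−1`
    (bb : ℤ) (hbb1 : h ≤ bb) (hbb2 : bb < h + p ^ n) (hbb3 : a bb = p ^ n - 1) :
    ∀ s : ℕ, s < p ^ n →
      Set.BijOn (fun t : ℤ => p ^ n - 1 + s - a t)
        {t : ℤ | h ≤ t ∧ t < h + p ^ n ∧ preceq p s (a t)}
        {u : ℕ | u < p ^ n ∧ preceq p s u} ∧
      (∀ t : ℤ, h ≤ t → t < h + p ^ n → preceq p s (a t) →
        t = Hfun p n b h ((p ^ n - 1 + s - a t) - s) bb ∧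
        Hfun p n b h s t = Hfun p n b h (p ^ n - 1 + s - a t) bb ∧
        Dfun p n b h s t =
          Dfun p n b h (p ^ n - 1 + s - a t) bb -
            Dfun p n b h ((p ^ n - 1 + s - a t) - s) bb) := by
  have hp2 : 2 ≤ p := hp.two_le
  have hpn : 0 < p ^ n := pow_pos (by omega) n
  haveI : NeZero (p ^ n) := ⟨by omega⟩
  have hcast : ((p ^ n : ℕ) : ℤ) = (p : ℤ) ^ n := by push_cast; ring
  have hE0 : (0:ℤ) < (p : ℤ) ^ n := by positivity
  have haDvd : ∀ t : ℤ, (p : ℤ) ^ n ∣ t + bfun p n b (a t) := by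
    intro t
    have h2 := (ha t).2
    rw [ZMod.intCast_eq_intCast_iff] at h2
    have h3 := h2.dvd
    rw [hcast] at h3
    simpa [sub_neg_eq_add] using h3
  have hbbDvd : (p : ℤ) ^ n ∣ bb + bfun p n b (p ^ n - 1) := by
    have := haDvd bb
    rwa [hbb3] at this
  have hauniq : ∀ v : ℕ, v < p ^ n → ∀ t : ℤ,
      ((p : ℤ) ^ n ∣ t + bfun p n b v) → a t = v := by
    intro v hv t hdvd
    refine bfun_inj p n b a hpn ha (a t) v (ha t).1 hv ?_
    rw [ZMod.intCast_eq_intCast_iff]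
    have hdd : (p : ℤ) ^ n ∣ bfun p n b v - bfun p n b (a t) := by
      have h3 : bfun p n b v - bfun p n b (a t)
          = (t + bfun p n b v) - (t + bfun p n b (a t)) := by ring
      rw [h3]
      exact dvd_sub hdvd (haDvd t)
    exact Int.modEq_iff_dvd.2 (by rw [hcast]; exact hdd)
  intro s hs
  have hsle : ∀ A, preceq p s A → s ≤ A := fun A hh => le_of_preceq p hp2 s A hh
  have pack : ∀ A : ℕ, A < p ^ n → preceq p s A →
      (p ^ n - 1 + s - A < p ^ n ∧ preceq p s (p ^ n - 1 + s - A)) ∧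
      bfun p n b (p ^ n - 1 + s - A) = bfun p n b s + bfun p n b (p ^ n - 1 - A) ∧
      bfun p n b (p ^ n - 1 - A) + bfun p n b A = bfun p n b (p ^ n - 1) := by
    intro A hA hpre
    have hsA : s ≤ A := hsle A hpre
    have hw : ∀ j, j < n → dig p (p ^ n - 1 - A) j = p - 1 - dig p A j :=
      fun j hj => dig_compl p hp2 n A j hA hj
    have hcar : ∀ j, dig p s j + dig p (p ^ n - 1 - A) j < p := by
      intro j
      by_cases hj : j < n
      · have h1 := hw j hj
        have h2 := hpre j
        have h3 := dig_lt p (by omega) A j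
        omega
      · have h1 : dig p s j = 0 :=
          dig_eq_zero p s j
            (lt_of_lt_of_le hs (Nat.pow_le_pow_right (by omega) (by omega)))
        have h2 : dig p (p ^ n - 1 - A) j = 0 :=
          dig_eq_zero p _ j
            (lt_of_lt_of_le (show p ^ n - 1 - A < p ^ n by omega)
              (Nat.pow_le_pow_right (by omega) (by omega)))
        omega
    have hu : p ^ n - 1 + s - A = s + (p ^ n - 1 - A) := by omega
    have hd : ∀ j, dig p (p ^ n - 1 + s - A) j = dig p s j + dig p (p ^ n - 1 - A) j := by
      intro j; rw [hu]; exact dig_add p (by omega) j s _ hcar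
    refine ⟨⟨by omega, fun j => ?_⟩, bfun_add p n b _ s _ hd, bfun_compl p n hp2 b _ A hw⟩
    rw [hd j]; omega
  have core : ∀ t : ℤ, h ≤ t → t < h + p ^ n → preceq p s (a t) →
      t = Hfun p n b h ((p ^ n - 1 + s - a t) - s) bb ∧
      Hfun p n b h s t = Hfun p n b h (p ^ n - 1 + s - a t) bb ∧
      Dfun p n b h s t = Dfun p n b h (p ^ n - 1 + s - a t) bb -
        Dfun p n b h ((p ^ n - 1 + s - a t) - s) bb := by
    intro t ht1 ht2 hpre
    have hA : a t < p ^ n := (ha t).1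
    have hsA : s ≤ a t := hsle _ hpre
    obtain ⟨-, hb2, hb3⟩ := pack (a t) hA hpre
    have hus : p ^ n - 1 + s - a t - s = p ^ n - 1 - a t := by omega
    rw [hus]
    have hdvd : (p : ℤ) ^ n ∣ (t - h) - (bfun p n b (p ^ n - 1 - a t) + bb - h) := by
      have heq : (t - h) - (bfun p n b (p ^ n - 1 - a t) + bb - h)
          = (t + bfun p n b (a t)) - (bb + bfun p n b (p ^ n - 1)) := by
        linear_combination -hb3
      rw [heq]
      exact dvd_sub (haDvd t) hbbDvd
    have htsub : t - h < (p : ℤ) ^ n := by omega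
    have htmod : (bfun p n b (p ^ n - 1 - a t) + bb - h) % ((p : ℤ) ^ n) = t - h := by
      have h1 : (bfun p n b (p ^ n - 1 - a t) + bb - h) % ((p : ℤ) ^ n)
          = (t - h) % ((p : ℤ) ^ n) := Int.modEq_iff_dvd.2 hdvd
      rwa [Int.emod_eq_of_lt (by omega) htsub] at h1
    obtain ⟨k, hCk⟩ : ∃ k : ℤ, bfun p n b (p ^ n - 1 - a t) + bb - h
        = (t - h) + ((p : ℤ) ^ n) * k := by
      refine ⟨(bfun p n b (p ^ n - 1 - a t) + bb - h) / ((p : ℤ) ^ n), ?_⟩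
      have h2 := Int.mul_ediv_add_emod (bfun p n b (p ^ n - 1 - a t) + bb - h) ((p : ℤ) ^ n)
      rw [htmod] at h2
      linarith
    have harg : bfun p n b (p ^ n - 1 + s - a t) + bb - h
        = (bfun p n b s + t - h) + ((p : ℤ) ^ n) * k := by
      rw [hb2]; linarith
    refine ⟨?_, ?_, ?_⟩
    · simp only [Hfun]
      rw [htmod]
      ring
    · simp only [Hfun]
      congr 1
      rw [harg, Int.add_mul_emod_self_left]
    · simp only [Dfun]
      rw [Int.fdiv_eq_ediv_of_nonneg _ (le_of_lt hE0), Int.fdiv_eq_ediv_of_nonneg _ (le_of_lt hE0),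
        Int.fdiv_eq_ediv_of_nonneg _ (le_of_lt hE0), harg, hCk,
        Int.add_mul_ediv_left _ _ (ne_of_gt hE0),
        Int.add_mul_ediv_left _ _ (ne_of_gt hE0),
        Int.ediv_eq_zero_of_lt (by omega) htsub]
      ring
  refine ⟨⟨?_, ?_, ?_⟩, core⟩
  · -- MapsTo
    intro t ht
    obtain ⟨ht1, ht2, ht3⟩ := ht
    obtain ⟨⟨hu1, hu2⟩, -, -⟩ := pack (a t) (ha t).1 ht3
    exact ⟨hu1, hu2⟩
  · -- InjOn
    intro t1 ht1 t2 ht2 heq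
    simp only [Set.mem_setOf_eq] at ht1 ht2
    simp only [] at heq
    have hA1 : a t1 < p ^ n := (ha t1).1
    have hA2 : a t2 < p ^ n := (ha t2).1
    have hAeq : a t1 = a t2 := by
      have h1 := hsle _ ht1.2.2
      have h2 := hsle _ ht2.2.2
      omega
    have hd : (p : ℤ) ^ n ∣ t1 - t2 := by
      have heq2 : t1 - t2 = (t1 + bfun p n b (a t1)) - (t2 + bfun p n b (a t2)) := by
        rw [hAeq]; ring
      rw [heq2]
      exact dvd_sub (haDvd t1) (haDvd t2)
    have habs : |t1 - t2| < (p : ℤ) ^ n := by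
      rw [abs_lt]
      obtain ⟨hx1, hx2, -⟩ := ht1
      obtain ⟨hy1, hy2, -⟩ := ht2
      constructor <;> omega
    have := Int.eq_zero_of_abs_lt_dvd hd habs
    omega
  · -- SurjOn
    intro u hu
    simp only [Set.mem_setOf_eq] at hu
    obtain ⟨hu1, hu2⟩ := hu
    have hsu : s ≤ u := hsle u hu2
    obtain ⟨⟨hv1, hv2⟩, -, -⟩ := pack u hu1 hu2
    refine ⟨h + (-(bfun p n b (p ^ n - 1 + s - u)) - h) % ((p : ℤ) ^ n), ⟨?_, ?_, ?_⟩, ?_⟩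
    · have := Int.emod_nonneg (-(bfun p n b (p ^ n - 1 + s - u)) - h) (ne_of_gt hE0)
      omega
    · have := Int.emod_lt_of_pos (-(bfun p n b (p ^ n - 1 + s - u)) - h) hE0
      omega
    all_goals
      have haeq : a (h + (-(bfun p n b (p ^ n - 1 + s - u)) - h) % ((p : ℤ) ^ n))
          = p ^ n - 1 + s - u := by
        refine hauniq _ hv1 _ ?_
        have e : (h + (-(bfun p n b (p ^ n - 1 + s - u)) - h) % ((p : ℤ) ^ n))
            + bfun p n b (p ^ n - 1 + s - u)
            = ((p : ℤ) ^ n) * (-((-(bfun p n b (p ^ n - 1 + s - u)) - h) / ((p : ℤ) ^ n))) := by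
          rw [Int.emod_def]; ring
        rw [e]
        exact dvd_mul_right _ _
    · rw [haeq]; exact hv2
    · simp only []
      rw [haeq]
      omega
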